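/- Let $m \ge 2$ be a natural number, $\alpha_m = \frac{2m}{4m-3}$, $Re > 0$, and let $\Omega_1, \Omega_m, \Omega_{m+1} > 0$ satisfy $\Omega_m^{m^2} \le 2^{m^2} \Omega_1 \Omega_{m+1}^{m^2-1}$. Define $D_k = Re^{\alpha_k - 1/2} \Omega_k^{\alpha_k}$ for $k \in \{1, m, m+1\}$ (with $\alpha_1 = 2$). Then $\left(\frac{D_m}{D_1}\right) \le 2^{2m^2} \left(\frac{D_{m+1}}{D_m}\right)^{(4m+1)(m-1)}$. -/

import Mathlib

/-!
Both sides are positive, so it suffices to compare logarithms, which are linear in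
`log Re`, `log Ω₁`, `log Ωm`, `log Ωm1` and `log 2`. With `α = αₘ`, `β = αₘ₊₁` and
`e = (4m + 1)(m - 1)`, the identities `α e = 2m² - α` and `β e = 2m² - 2` make the
`log Re` terms cancel, and what remains is twice the logarithm of the hypothesis.
-/

open Real

lemma log_rpow_mul_rpow {x y : ℝ} (hx : 0 < x) (hy : 0 < y) (a b : ℝ) :
    log (x ^ a * y ^ b) = a * log x + b * log y := by
  rw [log_mul (rpow_pos_of_pos hx a).ne' (rpow_pos_of_pos hy b).ne', log_rpow hx, log_rpow hy]

lemma mul_exponent_eq_sq_sub {m α : ℝ} (hα : α * (4 * m - 3) = 2 * m) :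
    α * ((4 * m + 1) * (m - 1)) = 2 * m ^ 2 - α := by
  linear_combination m * hα

lemma mul_exponent_eq_sq_sub_two {m β : ℝ} (hβ : β * (4 * (m + 1) - 3) = 2 * (m + 1)) :
    β * ((4 * m + 1) * (m - 1)) = 2 * m ^ 2 - 2 := by
  linear_combination (m - 1) * hβ

theorem Dm_triangular_general (m : ℕ) (Re Ω₁ Ωm Ωm1 : ℝ)
    (hRe : 0 < Re) (hΩ₁ : 0 < Ω₁) (hΩm : 0 < Ωm) (hΩm1 : 0 < Ωm1)
    (hΩ : Ωm ^ ((m : ℝ) ^ 2) ≤ 2 ^ ((m : ℝ) ^ 2) * Ω₁ * Ωm1 ^ ((m : ℝ) ^ 2 - 1))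
    (D₁ Dm Dm1 : ℝ)
    (hD₁ : D₁ = Re ^ ((2 : ℝ) - 1 / 2) * Ω₁ ^ (2 : ℝ))
    (hDm : Dm = Re ^ ((2 * (m : ℝ)) / (4 * m - 3) - 1 / 2) *
      Ωm ^ ((2 * (m : ℝ)) / (4 * m - 3)))
    (hDm1 : Dm1 = Re ^ ((2 * ((m : ℝ) + 1)) / (4 * (m + 1) - 3) - 1 / 2) *
      Ωm1 ^ ((2 * ((m : ℝ) + 1)) / (4 * (m + 1) - 3))) :
    Dm / D₁ ≤ 2 ^ (2 * (m : ℝ) ^ 2) *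
      (Dm1 / Dm) ^ ((4 * (m : ℝ) + 1) * ((m : ℝ) - 1)) := by
  have hα := mul_exponent_eq_sq_sub
    (div_mul_cancel₀ (2 * (m : ℝ)) (sub_ne_zero.2 (by norm_cast; omega)))
  have hβ := mul_exponent_eq_sq_sub_two
    (div_mul_cancel₀ (2 * ((m : ℝ) + 1)) (by ring_nf; positivity))
  have hlogΩ := log_le_log (by positivity) hΩ
  rw [log_mul (by positivity) (by positivity), log_mul (by positivity) (by positivity),
    log_rpow hΩm, log_rpow two_pos, log_rpow hΩm1] at hlogΩ
  have hD₁pos : 0 < D₁ := hD₁ ▸ by positivity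
  have hDmpos : 0 < Dm := hDm ▸ by positivity
  have hDm1pos : 0 < Dm1 := hDm1 ▸ by positivity
  rw [← log_le_log_iff (div_pos hDmpos hD₁pos) (by positivity), log_div hDmpos.ne' hD₁pos.ne',
    log_mul (by positivity) (by positivity), log_rpow two_pos,
    log_rpow (div_pos hDm1pos hDmpos), log_div hDm1pos.ne' hDmpos.ne', hD₁, hDm, hDm1,
    log_rpow_mul_rpow hRe hΩ₁, log_rpow_mul_rpow hRe hΩm, log_rpow_mul_rpow hRe hΩm1]
  linear_combination 2 * hlogΩ + (log Ωm + log Re) * hα - (log Re + log Ωm1) * hβ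

theorem Dm_triangular (m : ℕ) (hm : 2 ≤ m) (Re Ω₁ Ωm Ωm1 : ℝ)
    (hRe : 0 < Re) (hΩ₁ : 0 < Ω₁) (hΩm : 0 < Ωm) (hΩm1 : 0 < Ωm1)
    (hΩ : Ωm ^ ((m : ℝ) ^ 2) ≤ 2 ^ ((m : ℝ) ^ 2) * Ω₁ * Ωm1 ^ ((m : ℝ) ^ 2 - 1))
    (D₁ Dm Dm1 : ℝ)
    (hD₁ : D₁ = Re ^ ((2 : ℝ) - 1 / 2) * Ω₁ ^ (2 : ℝ))
    (hDm : Dm = Re ^ ((2 * (m : ℝ)) / (4 * m - 3) - 1 / 2) *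
      Ωm ^ ((2 * (m : ℝ)) / (4 * m - 3)))
    (hDm1 : Dm1 = Re ^ ((2 * ((m : ℝ) + 1)) / (4 * (m + 1) - 3) - 1 / 2) *
      Ωm1 ^ ((2 * ((m : ℝ) + 1)) / (4 * (m + 1) - 3))) :
    Dm / D₁ ≤ 2 ^ (2 * (m : ℝ) ^ 2) *
      (Dm1 / Dm) ^ ((4 * (m : ℝ) + 1) * ((m : ℝ) - 1)) :=
  Dm_triangular_general m Re Ω₁ Ωm Ωm1 hRe hΩ₁ hΩm hΩm1 hΩ D₁ Dm Dm1 hD₁ hDm hDm1
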